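/- arXiv:2403.04918 — 2 statements merged into one kernel-verified Lean document; each statement's English description precedes it below -/
import Mathlib

section
/- Algorithm d-encode, applied to any binary string w of length l·m − 1 with m ≥ ⌈2 log₂ l⌉ + 2, outputs an array of exactly l pairwise distinct binary strings of length m. -/
/-- Binary representation of `x` using `len` bits (most significant first). -/
def binRep (x len : ℕ) : List Bool :=
  (List.range len).map (fun i => Nat.testBit x (len - 1 - i))

/-- Find the first pair of indices `i < j` with equal blocks. -/
def findDup (bs : List (List Bool)) : Option (ℕ × ℕ) :=
  (List.range bs.length).findSome? (fun i =>
    (List.range bs.length).findSome? (fun j =>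
      if i < j ∧ bs[i]? = bs[j]? then some (i, j) else none))

/-- One duplicate-elimination step of the d-encode algorithm. -/
def dStep (l m : ℕ) (bs : List (List Bool)) : List (List Bool) :=
  let p := Nat.clog 2 l
  match findDup bs with
  | none => bs
  | some (i, j) =>
    let bs' := bs.eraseIdx j
    let avail : ℕ → Bool := fun k =>
      decide (1 ≤ k) &&
      bs'.all (fun b => decide (b.take (p + 1) ≠ binRep k (p + 1)))
    let j' := (((List.range (2 * l)).filter avail).getD (j - 1) 0)
    bs' ++ [binRep j' (p + 1) ++ binRep i p ++ List.replicate (m - 2 * p - 1) false]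

/-- The d-encode algorithm: segment `w ++ [1]` into `l` blocks of length `m`,
then eliminate duplicates (at most `l` elimination rounds are ever needed,
and `dStep` is the identity once no duplicates remain). -/
def dEncode (l m : ℕ) (w : List Bool) : List (List Bool) :=
  (dStep l m)^[l] ((List.range l).map (fun a => ((w ++ [true]).drop (a * m)).take m))

/-! Each round of duplicate elimination deletes one copy of a repeated block and appends a block
whose first `⌈log₂ l⌉ + 1` bits differ from those of every remaining block, so the length stays `l`
while the number of distinct blocks grows by one; after `l` rounds the `l` blocks are distinct.
A suitable prefix exists: since `2 l ≤ 2 ^ (⌈log₂ l⌉ + 1)`, distinct candidates `k < 2 l` have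
distinct prefixes, and at most `l` candidates (`0` and the prefixes of the `l - 1` remaining
blocks) are excluded, which leaves at least `l` of them, enough for the index `j - 1 < l` that
`dStep` uses. -/

lemma length_binRep (x n : ℕ) : (binRep x n).length = n := by simp [binRep]

lemma binRep_injOn (n : ℕ) : Set.InjOn (binRep · n) (Set.Iio (2 ^ n)) := by
  intro a ha b hb h
  apply Nat.eq_of_testBit_eq
  intro i
  by_cases hi : i < n
  · have h' := congrArg (·[n - 1 - i]?) h
    simpa [binRep, show n - 1 - i < n by omega, show n - 1 - (n - 1 - i) = i by omega] using h'
  · have hn : 2 ^ n ≤ 2 ^ i := Nat.pow_le_pow_right two_pos (by omega)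
    rw [Nat.testBit_lt_two_pow (lt_of_lt_of_le ha hn),
      Nat.testBit_lt_two_pow (lt_of_lt_of_le hb hn)]

lemma findDup_eq_none_iff (bs : List (List Bool)) : findDup bs = none ↔ bs.Nodup := by
  rw [List.nodup_iff_getElem?_ne_getElem?, findDup]
  simp only [List.findSome?_eq_none_iff, List.mem_range, ite_eq_right_iff, reduceCtorEq,
    imp_false, not_and]
  exact ⟨fun h i j hij hj => h i (hij.trans hj) j hj hij, fun h i _ j hj hij => h i j hij hj⟩

lemma findDup_eq_some_spec {bs : List (List Bool)} {i j : ℕ} (h : findDup bs = some (i, j)) :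
    i < j ∧ j < bs.length ∧ bs[i]? = bs[j]? := by
  obtain ⟨a, -, ha⟩ := List.exists_of_findSome?_eq_some h
  obtain ⟨b, hb, hab⟩ := List.exists_of_findSome?_eq_some ha
  split_ifs at hab with hc
  cases hab
  exact ⟨hc.1, List.mem_range.mp hb, hc.2⟩

lemma List.toFinset_eraseIdx_of_getElem?_eq {α : Type*} [DecidableEq α] {l : List α} {i j : ℕ}
    (hij : i ≠ j) (h : l[i]? = l[j]?) : (l.eraseIdx j).toFinset = l.toFinset := by
  ext x
  rw [List.mem_toFinset, List.mem_toFinset, List.mem_eraseIdx_iff_getElem?, List.mem_iff_getElem?]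
  refine ⟨fun ⟨k, _, hk⟩ => ⟨k, hk⟩, fun ⟨k, hk⟩ => ?_⟩
  by_cases hkj : k = j
  · exact ⟨i, hij, h.trans (hkj ▸ hk)⟩
  · exact ⟨k, hkj, hk⟩

lemma List.nodup_of_length_le_card_toFinset {α : Type*} [DecidableEq α] {l : List α}
    (h : l.length ≤ l.toFinset.card) : l.Nodup :=
  Multiset.coe_nodup.mp <| Multiset.toFinset_card_eq_card_iff_nodup.mp <|
    le_antisymm (Multiset.toFinset_card_le _) h

lemma sub_le_length_filter_fresh (bs : List (List Bool)) {N p : ℕ} (hN : N ≤ 2 ^ (p + 1)) :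
    N - (bs.length + 1) ≤ ((List.range N).filter fun k =>
      decide (1 ≤ k) && bs.all fun b => decide (b.take (p + 1) ≠ binRep k (p + 1))).length := by
  set fresh : ℕ → Bool := fun k =>
    decide (1 ≤ k) && bs.all fun b => decide (b.take (p + 1) ≠ binRep k (p + 1))
  -- stale candidates inject, via `code`, into `none :: bs.map (some ∘ List.take (p + 1))`
  let code : ℕ → Option (List Bool) := fun k => if k = 0 then none else some (binRep k (p + 1))
  have hcode : Set.InjOn code (Set.Iio N) := by
    intro a ha b hb hab
    simp only [code] at hab
    split_ifs at hab with ha0 hb0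
    · omega
    · exact binRep_injOn (p + 1) (lt_of_lt_of_le ha hN) (lt_of_lt_of_le hb hN) (Option.some.inj hab)
  have hsplit := List.length_eq_countP_add_countP fresh (l := List.range N)
  simp only [List.countP_eq_length_filter, List.length_range] at hsplit
  have hstale : (((List.range N).filter fun k => ¬fresh k).map code).length ≤
      (none :: bs.map (some ∘ List.take (p + 1))).length := by
    refine List.Nodup.length_le_of_subset ?_ ?_
    · refine (List.nodup_range.filter _).map_on fun a ha b hb => hcode ?_ ?_
      · simpa using List.mem_of_mem_filter ha
      · simpa using List.mem_of_mem_filter hb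
    · intro o ho
      simp only [List.mem_map, List.mem_filter, List.mem_range] at ho
      obtain ⟨k, ⟨hk, hstalek⟩, rfl⟩ := ho
      simp only [fresh, Bool.and_eq_true, decide_eq_true_eq, List.all_eq_true, not_and,
        not_forall, not_not] at hstalek
      by_cases hk0 : k = 0
      · simp [code, hk0]
      · obtain ⟨b, hb, hbk⟩ := hstalek (by omega)
        simp only [code, if_neg hk0, List.mem_cons, reduceCtorEq, false_or, List.mem_map,
          Function.comp_apply, Option.some.injEq]
        exact ⟨b, hb, hbk⟩
  simp only [List.length_map, List.length_cons] at hstale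
  omega

lemma dStep_eq_append_fresh {l m : ℕ} {bs : List (List Bool)} {i j : ℕ} (hlen : bs.length ≤ l)
    (h : findDup bs = some (i, j)) :
    ∃ k, (∀ b ∈ bs.eraseIdx j, b.take (Nat.clog 2 l + 1) ≠ binRep k (Nat.clog 2 l + 1)) ∧
      dStep l m bs = bs.eraseIdx j ++ [binRep k (Nat.clog 2 l + 1) ++ binRep i (Nat.clog 2 l) ++
        List.replicate (m - 2 * Nat.clog 2 l - 1) false] := by
  obtain ⟨hij, hj, -⟩ := findDup_eq_some_spec h
  have hcount := sub_le_length_filter_fresh (bs.eraseIdx j) (N := 2 * l) (p := Nat.clog 2 l)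
    (by rw [pow_succ]; linarith [Nat.le_pow_clog one_lt_two l])
  rw [List.length_eraseIdx_of_lt hj] at hcount
  refine ⟨_, ?_, by rw [dStep, h]⟩
  rw [List.getD_eq_getElem _ _ (by omega)]
  generalize_proofs hlt
  have hfresh := (List.mem_filter.mp (List.getElem_mem hlt)).2
  simp only [Bool.and_eq_true, List.all_eq_true, decide_eq_true_eq] at hfresh
  exact hfresh.2

lemma length_dStep (l m : ℕ) (bs : List (List Bool)) : (dStep l m bs).length = bs.length := by
  rcases hfd : findDup bs with _ | ⟨i, j⟩
  · simp [dStep, hfd]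
  · have hj := (findDup_eq_some_spec hfd).2.1
    simp [dStep, hfd, List.length_eraseIdx_of_lt hj]
    omega

lemma length_eq_of_mem_dStep {l m : ℕ} (hm : 2 * Nat.clog 2 l + 1 ≤ m) {bs : List (List Bool)}
    (hbs : ∀ b ∈ bs, b.length = m) : ∀ b ∈ dStep l m bs, b.length = m := by
  rcases hfd : findDup bs with _ | ⟨i, j⟩
  · simpa [dStep, hfd] using hbs
  · simp only [dStep, hfd, List.mem_append, List.mem_singleton]
    rintro b (hb | rfl)
    · exact hbs b (List.mem_of_mem_eraseIdx hb)
    · simp only [List.length_append, length_binRep, List.length_replicate]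
      omega

lemma min_le_card_toFinset_dStep {l m : ℕ} {bs : List (List Bool)} (hlen : bs.length ≤ l) :
    min bs.length (bs.toFinset.card + 1) ≤ (dStep l m bs).toFinset.card := by
  rcases hfd : findDup bs with _ | ⟨i, j⟩
  · rw [dStep, hfd, List.toFinset_card_of_nodup ((findDup_eq_none_iff bs).mp hfd)]
    exact min_le_left _ _
  · obtain ⟨hij, -, hbij⟩ := findDup_eq_some_spec hfd
    obtain ⟨k, hfresh, hstep⟩ := dStep_eq_append_fresh (m := m) hlen hfd
    have hnew : binRep k (Nat.clog 2 l + 1) ++ binRep i (Nat.clog 2 l) ++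
        List.replicate (m - 2 * Nat.clog 2 l - 1) false ∉ bs.eraseIdx j := fun hmem =>
      hfresh _ hmem (by rw [List.append_assoc, List.take_left' (length_binRep _ _)])
    rw [hstep, List.toFinset_append, Finset.card_union_of_disjoint (by simpa using hnew),
      List.toFinset_eraseIdx_of_getElem?_eq hij.ne hbij]
    simp

lemma length_iterate_dStep (l m n : ℕ) (bs : List (List Bool)) :
    ((dStep l m)^[n] bs).length = bs.length :=
  Function.Iterate.rec (fun bs' : List (List Bool) => bs'.length = bs.length) rfl
    (fun _ h => (length_dStep l m _).trans h) n

lemma min_le_card_toFinset_iterate_dStep {l m : ℕ} {bs : List (List Bool)} (hlen : bs.length ≤ l)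
    (n : ℕ) : min bs.length (bs.toFinset.card + n) ≤ ((dStep l m)^[n] bs).toFinset.card := by
  induction n with
  | zero => exact min_le_right _ _
  | succ n ih =>
    rw [Function.iterate_succ_apply']
    have hlen_n := length_iterate_dStep l m n bs
    have hstep := min_le_card_toFinset_dStep (m := m) (hlen_n.trans_le hlen)
    omega

lemma length_eq_of_mem_map_range_take_drop {α : Type*} {u : List α} {l m : ℕ}
    (hu : l * m ≤ u.length) :
    ∀ b ∈ (List.range l).map (fun a => (u.drop (a * m)).take m), b.length = m := by
  simp only [List.mem_map, List.mem_range, forall_exists_index, and_imp,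
    forall_apply_eq_imp_iff₂, List.length_take, List.length_drop]
  intro a ha
  have : (a + 1) * m ≤ l * m := Nat.mul_le_mul_right m ha
  rw [add_mul, one_mul] at this
  omega

theorem stmt_8_general (l m : ℕ) (hm : 2 * Nat.clog 2 l + 2 ≤ m)
    (w : List Bool) (hw : w.length = l * m - 1) :
    (dEncode l m w).length = l ∧
    (∀ b ∈ dEncode l m w, b.length = m) ∧
    (dEncode l m w).Pairwise (· ≠ ·) := by
  unfold dEncode
  set bs := (List.range l).map fun a => ((w ++ [true]).drop (a * m)).take m
  have hlen : bs.length = l := by simp [bs]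
  have hblocks : ∀ b ∈ bs, b.length = m := length_eq_of_mem_map_range_take_drop <| by
    rw [List.length_append, hw, List.length_singleton]; omega
  have hlen' := length_iterate_dStep l m l bs
  have hcard := min_le_card_toFinset_iterate_dStep (m := m) hlen.le l
  refine ⟨hlen'.trans hlen, ?_, List.nodup_of_length_le_card_toFinset (by omega)⟩
  exact Function.Iterate.rec (fun bs' : List (List Bool) => ∀ b ∈ bs', b.length = m) hblocks
    (fun _ => length_eq_of_mem_dStep (by omega)) l

/-- d-encode outputs exactly `l` pairwise distinct binary strings of length `m`. -/
theorem stmt_8 (l m : ℕ) (hl : 2 ≤ l) (hm : 2 * Nat.clog 2 l + 2 ≤ m)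
    (w : List Bool) (hw : w.length = l * m - 1) :
    (dEncode l m w).length = l ∧
    (∀ b ∈ dEncode l m w, b.length = m) ∧
    (dEncode l m w).Pairwise (· ≠ ·) :=
  stmt_8_general l m hm w hw
end

section
/- If a sequence of l pairwise distinct elements has a single maximal run of d consecutive elements deleted (1 ≤ d ≤ l−2, with at least one surviving element on each side), then the successor function of the surviving subsequence differs from the original successor function next in exactly d + 1 entries. -/
/-- Deleting a single maximal run of `d` consecutive elements changes the
successor function in exactly `d + 1` entries. -/
theorem stmt_15 (m l j d : ℕ) (hj : 1 ≤ j) (hd : 1 ≤ d) (hjd : j + d ≤ l - 1)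
    (hl : 3 ≤ l)
    (u : Fin l → (Fin m → Bool)) (hu : Function.Injective u)
    (nxt g : (Fin m → Bool) → (Fin m → Bool))
    (hn1 : ∀ i : Fin l, ∀ h : (i : ℕ) + 1 < l, nxt (u i) = u ⟨(i : ℕ) + 1, h⟩)
    (hn2 : ∀ s, (∀ i : Fin l, (i : ℕ) + 1 < l → s ≠ u i) → nxt s = s)
    (hg1 : ∀ i : Fin l, ∀ h : (i : ℕ) + 1 < l,
      ((i : ℕ) + 1 < j ∨ j + d ≤ (i : ℕ)) → g (u i) = u ⟨(i : ℕ) + 1, h⟩)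
    (hg2 : g (u ⟨j - 1, by omega⟩) = u ⟨j + d, by omega⟩)
    (hg3 : ∀ i : Fin l, j ≤ (i : ℕ) → (i : ℕ) < j + d → g (u i) = u i)
    (hg4 : g (u ⟨l - 1, by omega⟩) = u ⟨l - 1, by omega⟩)
    (hg5 : ∀ s, (∀ i : Fin l, s ≠ u i) → g s = s) :
    Set.ncard {s | nxt s ≠ g s} = d + 1 := by
  set f : Fin (d + 1) → (Fin m → Bool) :=
    fun k => u ⟨j - 1 + (k : ℕ), by omega⟩ with hf
  have hfinj : Function.Injective f := by
    intro a b h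
    have h2 := hu h
    have h3 : j - 1 + (a : ℕ) = j - 1 + (b : ℕ) := congrArg Fin.val h2
    exact Fin.ext (by omega)
  have key : {s | nxt s ≠ g s} = Set.range f := by
    ext s
    simp only [Set.mem_setOf_eq, Set.mem_range]
    constructor
    · intro hs
      by_cases hex : ∃ i : Fin l, s = u i
      · obtain ⟨i, rfl⟩ := hex
        by_cases hi : (i : ℕ) + 1 < l
        · have hn := hn1 i hi
          by_cases hcase : (i : ℕ) + 1 < j ∨ j + d ≤ (i : ℕ)
          · exact absurd (hn.trans (hg1 i hi hcase).symm) hs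
          · push_neg at hcase
            refine ⟨⟨(i : ℕ) - (j - 1), by omega⟩, ?_⟩
            simp only [hf]
            exact congrArg u
              (Fin.ext (show j - 1 + ((i : ℕ) - (j - 1)) = (i : ℕ) by omega))
        · have h1 : nxt (u i) = u i := by
            apply hn2
            intro i' hi' heq
            have hv : (i : ℕ) = (i' : ℕ) := congrArg Fin.val (hu heq)
            omega
          have h2 : g (u i) = u i := by
            have hii : i = ⟨l - 1, by omega⟩ :=
              Fin.ext (show (i : ℕ) = l - 1 by omega)
            rw [hii]; exact hg4
          exact absurd (h1.trans h2.symm) hs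
      · push_neg at hex
        have h1 : nxt s = s := hn2 s (fun i _ => hex i)
        have h2 : g s = s := hg5 s hex
        exact absurd (h1.trans h2.symm) hs
    · rintro ⟨k, rfl⟩
      have hkl := k.isLt
      have hi : (j - 1 + (k : ℕ)) + 1 < l := by omega
      have hn := hn1 ⟨j - 1 + (k : ℕ), by omega⟩ hi
      simp only [hf]
      by_cases hk : (k : ℕ) = 0
      · have hgeq : g (u ⟨j - 1 + (k : ℕ), by omega⟩) = u ⟨j + d, by omega⟩ := by
          have h1 : (⟨j - 1 + (k : ℕ), by omega⟩ : Fin l) = ⟨j - 1, by omega⟩ :=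
            Fin.ext (show j - 1 + (k : ℕ) = j - 1 by omega)
          rw [h1]; exact hg2
        rw [hn, hgeq]
        intro heq
        have := congrArg Fin.val (hu heq)
        simp only [Fin.val_mk] at this
        omega
      · have hgeq := hg3 ⟨j - 1 + (k : ℕ), by omega⟩
          (show j ≤ j - 1 + (k : ℕ) by omega)
          (show j - 1 + (k : ℕ) < j + d by omega)
        rw [hn, hgeq]
        intro heq
        have := congrArg Fin.val (hu heq)
        simp only [Fin.val_mk] at this
        omega
  rw [key, ← Nat.card_coe_set_eq, Nat.card_range_of_injective hfinj]
  simp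
end
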